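/- Let D ∈ ℝ^{m×k} have full column rank and let A, B ∈ ℝ^{m×m} be symmetric positive definite with A ⪯ B. Then D (DᵀBD)⁻¹ Dᵀ ⪯ D (DᵀAD)⁻¹ Dᵀ. -/

import Mathlib

namespace Matrix

open scoped ComplexOrder

variable {n : Type*} [Fintype n] [DecidableEq n]

/-- Both factorizations `S⁻¹ - T⁻¹ = S⁻¹ (T - S) T⁻¹ = T⁻¹ (T - S) S⁻¹` combine into a
congruence by `T⁻¹`, which makes positivity visible. -/
theorem inv_sub_inv_eq_inv_mul_mul_inv {α : Type*} [CommRing α] {S T : Matrix n n α}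
    (hS : IsUnit S) (hT : IsUnit T) :
    S⁻¹ - T⁻¹ = T⁻¹ * ((T - S) + (T - S) * S⁻¹ * (T - S)) * T⁻¹ := by
  have h_left : S⁻¹ - T⁻¹ = S⁻¹ * (T - S) * T⁻¹ := inv_sub_inv (iff_of_true hS hT)
  have h_right : S⁻¹ - T⁻¹ = T⁻¹ * (T - S) * S⁻¹ := by
    rw [← neg_sub T⁻¹, inv_sub_inv (iff_of_true hT hS), ← neg_sub T S]
    noncomm_ring
  calc S⁻¹ - T⁻¹ = (T⁻¹ + (S⁻¹ - T⁻¹)) * (T - S) * T⁻¹ := by rw [add_sub_cancel, h_left]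
    _ = T⁻¹ * ((T - S) + (T - S) * S⁻¹ * (T - S)) * T⁻¹ := by rw [h_right]; noncomm_ring

theorem PosDef.posSemidef_inv_sub_inv {𝕜 : Type*} [RCLike 𝕜] {S T : Matrix n n 𝕜}
    (hS : S.PosDef) (hST : (T - S).PosSemidef) : (S⁻¹ - T⁻¹).PosSemidef := by
  have hT : T.PosDef := by simpa using hS.add_posSemidef hST
  have h_inner : ((T - S) + (T - S) * S⁻¹ * (T - S)).PosSemidef := by
    refine hST.add ?_
    simpa [hST.isHermitian.eq] using hS.inv.posSemidef.conjTranspose_mul_mul_same (T - S)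
  rw [inv_sub_inv_eq_inv_mul_mul_inv hS.isUnit hT.isUnit]
  simpa [hT.inv.isHermitian.eq] using h_inner.conjTranspose_mul_mul_same T⁻¹

end Matrix

open Matrix

theorem sandwich_inv_antitone_general {m k : ℕ} (D : Matrix (Fin m) (Fin k) ℝ)
    (hD : LinearIndependent ℝ (fun j : Fin k => D.transpose j))
    (A B : Matrix (Fin m) (Fin m) ℝ)
    (hApd : A.PosDef)
    (hAB : (B - A).PosSemidef) :
    (D * (D.transpose * A * D)⁻¹ * D.transpose
      - D * (D.transpose * B * D)⁻¹ * D.transpose).PosSemidef := by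
  rw [← conjTranspose_eq_transpose_of_trivial]
  have hS : (Dᴴ * A * D).PosDef := hApd.conjTranspose_mul_mul_same (mulVec_injective_iff.mpr hD)
  have hST : (Dᴴ * B * D - Dᴴ * A * D).PosSemidef := by
    simpa only [Matrix.mul_sub, Matrix.sub_mul] using hAB.conjTranspose_mul_mul_same D
  simpa only [Matrix.mul_sub, Matrix.sub_mul] using
    (hS.posSemidef_inv_sub_inv hST).mul_mul_conjTranspose_same D

/-- Let `D : ℝ^{m×k}` have full column rank and `A, B : ℝ^{m×m}` be symmetric positive
definite with `A ⪯ B`. Then `D (DᵀBD)⁻¹ Dᵀ ⪯ D (DᵀAD)⁻¹ Dᵀ`. -/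
theorem sandwich_inv_antitone {m k : ℕ} (D : Matrix (Fin m) (Fin k) ℝ)
    (hD : LinearIndependent ℝ (fun j : Fin k => D.transpose j))
    (A B : Matrix (Fin m) (Fin m) ℝ)
    (hAsymm : A.IsSymm) (hBsymm : B.IsSymm)
    (hApd : A.PosDef) (hBpd : B.PosDef)
    (hAB : (B - A).PosSemidef) :
    (D * (D.transpose * A * D)⁻¹ * D.transpose
      - D * (D.transpose * B * D)⁻¹ * D.transpose).PosSemidef :=
  sandwich_inv_antitone_general D hD A B hApd hAB
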